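/- Suppose the potential q is even on [0,a], i.e. q(a−x) = q(x) for all x ∈ [0,a]. Then for every λ ∈ ℂ, S'(a) = C(a). -/

import Mathlib

/-!
The Wronskian of two solutions of `y'' = p y` is constant. Because `q` is even, the reflection
`x ↦ C (a - x)` is again a solution, with derivative `-C' (a - x)`, so its Wronskian with `S`,
`W x = C (a - x) S' x + C' (a - x) S x`, is constant on `[0, a]`.
Evaluating at the endpoints gives `W 0 = C a` and `W a = S' a`.
-/

open Set

section Wronskian

variable {𝕜 𝔸 : Type*} [NontriviallyNormedField 𝕜] [NormedCommRing 𝔸]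
  [NormedAlgebra 𝕜 𝔸] {u u' v v' p : 𝕜 → 𝔸} {s : Set 𝕜} {x : 𝕜}

theorem hasDerivWithinAt_wronskian_eq_zero
    (hu : HasDerivWithinAt u (u' x) s x) (hu' : HasDerivWithinAt u' (p x * u x) s x)
    (hv : HasDerivWithinAt v (v' x) s x) (hv' : HasDerivWithinAt v' (p x * v x) s x) :
    HasDerivWithinAt (fun y => u y * v' y - u' y * v y) 0 s x :=
  ((hu.mul hv').sub (hu'.mul hv)).congr_deriv (by ring)

end Wronskian

theorem HasDerivWithinAt.comp_const_sub_of_mapsTo {𝕜 F : Type*}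
    [NontriviallyNormedField 𝕜] [NormedAddCommGroup F] [NormedSpace 𝕜 F]
    {f : 𝕜 → F} {f' : F} {s t : Set 𝕜} {a x : 𝕜}
    (hf : HasDerivWithinAt f f' s (a - x)) (hst : MapsTo (a - ·) t s) :
    HasDerivWithinAt (fun y => f (a - y)) (-f') t x := by
  simpa [Function.comp_def] using hf.scomp x ((hasDerivWithinAt_id x t).const_sub a) hst

theorem mapsTo_const_sub_Icc_zero (a : ℝ) : MapsTo (a - ·) (Icc 0 a) (Icc 0 a) :=
  fun _ ⟨h₀, h₁⟩ => ⟨sub_nonneg.2 h₁, sub_le_self a h₀⟩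

theorem eq_of_hasDerivWithinAt_zero_Icc {E : Type*} [NormedAddCommGroup E] [NormedSpace ℝ E]
    {f : ℝ → E} {a b : ℝ} (hab : a ≤ b)
    (hf : ∀ x ∈ Icc a b, HasDerivWithinAt f 0 (Icc a b) x) : f b = f a :=
  constant_of_has_deriv_right_zero (fun x hx => (hf x hx).continuousWithinAt)
    (fun x hx => (hf x (Ico_subset_Icc_self hx)).mono_of_mem_nhdsWithin
      (Icc_mem_nhdsGE_of_mem hx)) b (right_mem_Icc.2 hab)

theorem even_potential_Sd_eq_C_general
    (a : ℝ) (ha : 0 < a) (q : ℝ → ℝ)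
    (hqeven : ∀ x ∈ Set.Icc 0 a, q (a - x) = q x)
    (lam : ℂ) (C S Cd Sd : ℝ → ℂ)
    (hC : ∀ x ∈ Set.Icc 0 a, HasDerivWithinAt C (Cd x) (Set.Icc 0 a) x)
    (hC' : ∀ x ∈ Set.Icc 0 a,
      HasDerivWithinAt Cd ((q x : ℂ) * C x - lam * C x) (Set.Icc 0 a) x)
    (hS : ∀ x ∈ Set.Icc 0 a, HasDerivWithinAt S (Sd x) (Set.Icc 0 a) x)
    (hS' : ∀ x ∈ Set.Icc 0 a,
      HasDerivWithinAt Sd ((q x : ℂ) * S x - lam * S x) (Set.Icc 0 a) x)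
    (hC0 : C 0 = 1) (hCd0 : Cd 0 = 0) (hS0 : S 0 = 0) (hSd0 : Sd 0 = 1) :
    Sd a = C a := by
  have hrefl := mapsTo_const_sub_Icc_zero a
  have hR : ∀ x ∈ Icc 0 a,
      HasDerivWithinAt (fun y => C (a - y)) (-Cd (a - x)) (Icc 0 a) x := fun x hx =>
    (hC _ (hrefl hx)).comp_const_sub_of_mapsTo hrefl
  have hR' : ∀ x ∈ Icc 0 a, HasDerivWithinAt (fun y => -Cd (a - y))
      (((q x : ℂ) - lam) * C (a - x)) (Icc 0 a) x := fun x hx => by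
    simpa [hqeven x hx, sub_mul] using
      ((hC' _ (hrefl hx)).comp_const_sub_of_mapsTo hrefl).fun_neg
  have hW := eq_of_hasDerivWithinAt_zero_Icc ha.le fun x hx =>
    hasDerivWithinAt_wronskian_eq_zero (p := fun x => (q x : ℂ) - lam)
      (hR x hx) (hR' x hx) (hS x hx) ((hS' x hx).congr_deriv (sub_mul _ _ _).symm)
  simpa [hC0, hCd0, hS0, hSd0] using hW

/-- For an even potential `q` on `[0,a]`, one has `S\'(a) = C(a)`. -/
theorem even_potential_Sd_eq_C
    (a : ℝ) (ha : 0 < a) (q : ℝ → ℝ) (hq : ContinuousOn q (Set.Icc 0 a))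
    (hqeven : ∀ x ∈ Set.Icc 0 a, q (a - x) = q x)
    (lam : ℂ) (C S Cd Sd : ℝ → ℂ)
    (hC : ∀ x ∈ Set.Icc 0 a, HasDerivWithinAt C (Cd x) (Set.Icc 0 a) x)
    (hC' : ∀ x ∈ Set.Icc 0 a,
      HasDerivWithinAt Cd ((q x : ℂ) * C x - lam * C x) (Set.Icc 0 a) x)
    (hS : ∀ x ∈ Set.Icc 0 a, HasDerivWithinAt S (Sd x) (Set.Icc 0 a) x)
    (hS' : ∀ x ∈ Set.Icc 0 a,
      HasDerivWithinAt Sd ((q x : ℂ) * S x - lam * S x) (Set.Icc 0 a) x)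
    (hC0 : C 0 = 1) (hCd0 : Cd 0 = 0) (hS0 : S 0 = 0) (hSd0 : Sd 0 = 1) :
    Sd a = C a :=
  even_potential_Sd_eq_C_general a ha q hqeven lam C S Cd Sd hC hC' hS hS' hC0 hCd0 hS0 hSd0
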